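/- Let (A_α)_{α<ω₁} be a continuous nested transfinite sequence of separable C*-algebras with union A, and let f be a pure state on A. Then the set S = {α < ω₁ : f restricted to A_α is a pure state on A_α} is closed in ω₁: for every countable S₀ ⊆ S, sup S₀ ∈ S. -/

import Mathlib

open scoped ComplexOrder
open Filter Topology

section
variable {A : Type*} [NonUnitalNormedRing A] [StarRing A] [CStarRing A]
  [NormedSpace ℂ A] [IsScalarTower ℂ A A] [SMulCommClass ℂ A A] [StarModule ℂ A]
  [CompleteSpace A]

/-- A state on a (possibly nonunital) C*-algebra: a positive linear functional
of norm one. -/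
def IsState {C : Type*} [NonUnitalNormedRing C] [StarRing C] [Module ℂ C]
    (f : C → ℂ) : Prop :=
  IsLinearMap ℂ f ∧ (∀ x, 0 ≤ f (star x * x)) ∧
    (∀ x, ‖f x‖ ≤ ‖x‖) ∧ ∀ ε : ℝ, 0 < ε → ∃ x, ‖x‖ ≤ 1 ∧ 1 - ε < ‖f x‖

/-- A pure state: an extreme point of the state space. -/
def IsPureState {C : Type*} [NonUnitalNormedRing C] [StarRing C] [Module ℂ C]
    (f : C → ℂ) : Prop :=
  IsState f ∧ ∀ g h : C → ℂ, IsState g → IsState h →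
    (∀ x, f x = (g x + h x) / 2) → g = h

lemma isState_comp' {B C : Type*} [NonUnitalNormedRing B] [StarRing B] [Module ℂ B]
    [NonUnitalNormedRing C] [StarRing C] [Module ℂ C] {g : C → ℂ} {e : B → C}
    (hlin : IsLinearMap ℂ g) (hpos : ∀ x, 0 ≤ g (star x * x)) (hbd : ∀ x, ‖g x‖ ≤ ‖x‖)
    (headd : ∀ x y, e (x + y) = e x + e y) (hesmul : ∀ (c : ℂ) x, e (c • x) = c • e x)
    (hemul : ∀ x y, e (x * y) = e x * e y)
    (hestar : ∀ x, e (star x) = star (e x)) (henorm : ∀ x, ‖e x‖ = ‖x‖)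
    (heps : ∀ ε : ℝ, 0 < ε → ∃ x : B, ‖x‖ ≤ 1 ∧ 1 - ε < ‖g (e x)‖) :
    IsState (g ∘ e) := by
  refine ⟨⟨fun x y => by simp [headd, hlin.map_add], fun c x => by
    simp [hesmul, hlin.map_smul]⟩, ?_, ?_, heps⟩
  · intro x
    simpa [Function.comp, hemul, hestar] using hpos (e x)
  · intro x
    simpa [Function.comp, henorm] using hbd (e x)

lemma continuous_of_isLinearMap_bound {C : Type*} [NonUnitalNormedRing C] [Module ℂ C]
    {g : C → ℂ} (hlin : IsLinearMap ℂ g) (hbd : ∀ x, ‖g x‖ ≤ ‖x‖) : Continuous g := by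
  refine (LipschitzWith.of_dist_le_mul (K := 1) fun x y => ?_).continuous
  simpa [dist_eq_norm, ← hlin.map_sub] using hbd (x - y)

/- Statement 10 (first half of Lemma 4): let `(A_α)_{α<ω₁}` be a continuous
nested transfinite sequence of separable C*-subalgebras with union the whole
C*-algebra `A`, and let `f` be a pure state on `A`.  Then the set
`S = {α < ω₁ : f|_{A_α} is a pure state on A_α}` is closed in `ω₁`: for every
countable nonempty `S₀ ⊆ S`, `sup S₀ ∈ S`. -/
theorem stmt_10 (𝒜 : Ordinal → NonUnitalStarSubalgebra ℂ A)
    (hclosed : ∀ α, α < (Cardinal.aleph 1).ord → IsClosed (𝒜 α : Set A))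
    (hsep : ∀ α, α < (Cardinal.aleph 1).ord →
      TopologicalSpace.SeparableSpace (𝒜 α))
    (hmono : ∀ β α, β ≤ α → α < (Cardinal.aleph 1).ord → 𝒜 β ≤ 𝒜 α)
    (hcont : ∀ α, α < (Cardinal.aleph 1).ord → Order.IsSuccLimit α →
      (𝒜 α : Set A) = closure (⋃ β < α, (𝒜 β : Set A)))
    (hunion : (⋃ α < (Cardinal.aleph 1).ord, (𝒜 α : Set A)) = Set.univ)
    (f : A → ℂ) (hf : IsPureState f) :
    ∀ S₀ ⊆ {α | α < (Cardinal.aleph 1).ord ∧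
        IsPureState (f ∘ Subtype.val : 𝒜 α → ℂ)},
      S₀.Nonempty → S₀.Countable →
      sSup S₀ ∈ {α | α < (Cardinal.aleph 1).ord ∧
        IsPureState (f ∘ Subtype.val : 𝒜 α → ℂ)} := by
  intro S₀ hS₀ hne hcount
  have hbdd : BddAbove S₀ := ⟨(Cardinal.aleph 1).ord, fun x hx => ((hS₀ hx).1).le⟩
  set α := sSup S₀ with hαdef
  have hαlt : α < (Cardinal.aleph 1).ord := by
    obtain ⟨e, he⟩ := Set.Countable.exists_eq_range hcount hne
    have hb : BddAbove (Set.range e) := Ordinal.bddAbove_range e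
    have h1 : α ≤ ⨆ n, e n := by
      refine csSup_le hne fun a ha => ?_
      rw [he] at ha
      obtain ⟨n, rfl⟩ := ha
      exact le_ciSup hb n
    have h2 : (⨆ n, e n) < (Cardinal.aleph 1).ord := by
      apply Ordinal.iSup_lt_ord_lift
      · rw [Cardinal.isRegular_aleph_one.cof_eq]
        simpa using Cardinal.aleph0_lt_aleph_one
      · intro n
        exact (hS₀ (he ▸ Set.mem_range_self n)).1
    exact lt_of_le_of_lt h1 h2
  by_cases hmem : α ∈ S₀
  · exact hS₀ hmem
  have hlt : ∀ γ ∈ S₀, γ < α := fun γ hγ =>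
    lt_of_le_of_ne (le_csSup hbdd hγ) (fun h => hmem (h ▸ hγ))
  have hexists : ∀ β < α, ∃ γ ∈ S₀, β < γ := fun β hβ => exists_lt_of_lt_csSup hne hβ
  have hlim : Order.IsSuccLimit α := by
    constructor
    · intro h0
      obtain ⟨γ, hγ⟩ := hne
      exact not_isMin_of_lt (hlt γ hγ) h0
    · intro β hβ
      obtain ⟨γ, hγ, hβγ⟩ := hexists β hβ.lt
      exact hβ.2 hβγ (hlt γ hγ)
  -- the union of the algebras indexed by S₀
  set D : Set A := ⋃ γ ∈ S₀, (𝒜 γ : Set A) with hD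
  have hDsub : D ⊆ (𝒜 α : Set A) := by
    intro x hx
    obtain ⟨γ, hγ, hxγ⟩ := Set.mem_iUnion₂.1 hx
    exact hmono γ α (hlt γ hγ).le hαlt hxγ
  have hdense : (𝒜 α : Set A) ⊆ closure D := by
    rw [hcont α hαlt hlim]
    refine closure_mono ?_
    intro x hx
    obtain ⟨β, hβ, hxβ⟩ := Set.mem_iUnion₂.1 hx
    obtain ⟨γ, hγ, hβγ⟩ := hexists β hβ
    exact Set.mem_iUnion₂.2 ⟨γ, hγ, hmono β γ hβγ.le (hS₀ hγ).1 hxβ⟩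
  -- inclusion maps
  have hsubα : ∀ γ ∈ S₀, (𝒜 γ : NonUnitalStarSubalgebra ℂ A) ≤ 𝒜 α := fun γ hγ =>
    hmono γ α (hlt γ hγ).le hαlt
  -- the restriction of f to 𝒜 α is a state
  have hfα : IsState (f ∘ Subtype.val : 𝒜 α → ℂ) := by
    refine isState_comp' hf.1.1 hf.1.2.1 hf.1.2.2.1
      (fun x y => rfl) (fun c x => rfl) (fun x y => rfl) (fun x => rfl) (fun x => rfl) ?_
    intro ε hε
    obtain ⟨γ, hγ⟩ := hne
    obtain ⟨x, hx1, hx2⟩ := (hS₀ hγ).2.1.2.2.2 ε hε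
    exact ⟨⟨x.1, hsubα γ hγ x.2⟩, hx1, hx2⟩
  refine ⟨hαlt, hfα, ?_⟩
  -- purity
  intro g h hg hh hgh
  -- g and h agree on each 𝒜 γ, γ ∈ S₀
  have key : ∀ (x : 𝒜 α), (x : A) ∈ D → g x = h x := by
    intro x hx
    obtain ⟨γ, hγ, hxγ⟩ := Set.mem_iUnion₂.1 hx
    set ι : 𝒜 γ → 𝒜 α := fun y => ⟨y.1, hsubα γ hγ y.2⟩ with hι
    have hfγ : IsPureState (f ∘ Subtype.val : 𝒜 γ → ℂ) := (hS₀ hγ).2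
    have hgh' : ∀ y : 𝒜 γ, (f ∘ Subtype.val) y = ((g ∘ ι) y + (h ∘ ι) y) / 2 :=
      fun y => hgh (ι y)
    -- norm lower bounds for the restrictions
    have hbound : ∀ (p q : 𝒜 α → ℂ), IsState q →
        (∀ y : 𝒜 α, (f ∘ Subtype.val) y = (p y + q y) / 2) →
        ∀ ε : ℝ, 0 < ε → ∃ y : 𝒜 γ, ‖y‖ ≤ 1 ∧ 1 - ε < ‖(p ∘ ι) y‖ := by
      intro p q hq hpq ε hε
      obtain ⟨y, hy1, hy2⟩ := hfγ.1.2.2.2 (ε / 2) (by linarith)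
      refine ⟨y, hy1, ?_⟩
      have h1 : p (ι y) = 2 * (f ∘ Subtype.val) (ι y) - q (ι y) := by
        rw [hpq (ι y)]; ring
      have h2 : ‖q (ι y)‖ ≤ 1 := le_trans (hq.2.2.1 (ι y)) hy1
      have h3 : ‖(2 : ℂ) * (f ∘ Subtype.val) (ι y)‖ - ‖q (ι y)‖ ≤ ‖p (ι y)‖ :=
        h1 ▸ norm_sub_norm_le _ _
      have h4 : ‖(2 : ℂ) * (f ∘ Subtype.val) (ι y)‖ = 2 * ‖(f ∘ Subtype.val) (ι y)‖ := by
        rw [norm_mul]; norm_num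
      have hy2' : (1 : ℝ) - ε / 2 < ‖(f ∘ Subtype.val) (ι y)‖ := hy2
      show 1 - ε < ‖p (ι y)‖
      rw [h4] at h3
      linarith
    -- the restrictions are states
    have hstate : ∀ p : 𝒜 α → ℂ, IsState p →
        (∀ ε : ℝ, 0 < ε → ∃ y : 𝒜 γ, ‖y‖ ≤ 1 ∧ 1 - ε < ‖(p ∘ ι) y‖) → IsState (p ∘ ι) := by
      intro p hp heps
      exact isState_comp' hp.1 hp.2.1 hp.2.2.1
        (fun x y => rfl) (fun c x => rfl) (fun x y => rfl) (fun x => rfl) (fun x => rfl) heps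
    have hgι : IsState (g ∘ ι) := hstate g hg
      (hbound g h hh hgh)
    have hhι : IsState (h ∘ ι) := hstate h hh
      (hbound h g hg (fun y => by rw [hgh y]; ring))
    have heq : g ∘ ι = h ∘ ι := hfγ.2 (g ∘ ι) (h ∘ ι) hgι hhι hgh'
    have : ι ⟨(x : A), hxγ⟩ = x := Subtype.ext rfl
    calc g x = (g ∘ ι) ⟨(x : A), hxγ⟩ := by rw [Function.comp_apply, this]
      _ = (h ∘ ι) ⟨(x : A), hxγ⟩ := by rw [heq]
      _ = h x := by rw [Function.comp_apply, this]
  -- density argument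
  have hdenseE : Dense {x : 𝒜 α | (x : A) ∈ D} := by
    rw [Topology.IsInducing.subtypeVal.dense_iff]
    intro x
    refine closure_mono ?_ (hdense x.2)
    intro d hd
    exact ⟨⟨d, hDsub hd⟩, hd, rfl⟩
  exact Continuous.ext_on hdenseE
    (continuous_of_isLinearMap_bound hg.1 hg.2.2.1)
    (continuous_of_isLinearMap_bound hh.1 hh.2.2.1)
    (fun x hx => key x hx)
end
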